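/- arXiv:2005.08228 — 2 statements merged into one kernel-verified Lean document; each statement's English description precedes it below -/
import Mathlib

section
/- Let ν ≥ 6 be an integer and δ a divisor of ν with 3 ≤ δ ≤ ν − 3. Then there exists a ν × ν matrix M with entries in {0,1} such that: every row of M has exactly δ ones, every column of M has exactly δ ones, M has two identical rows (some i ≠ i' with equal rows), and the columns of M are pairwise distinct. -/
/-!
Start from the circulant band matrix whose row `i` has its `δ` ones in columns `i, …, i + δ - 1`
(mod `ν`), so all line sums are `δ`. Exchanging the entries of columns `0` and `δ` within rows `1`
and `-1` turns row `1` into a copy of row `0` and keeps every column sum, since each of the two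
columns has exactly one `1` in these two rows.

Rows `±1` are the only ones changed, so it remains to see that two columns `j ≠ j'` of the band
matrix differ in a row other than `±1`. Writing `d = j' - j` with `2 d ≤ ν` (up to exchanging `j`
and `j'`): if `d ≤ min δ (ν - δ)`, the columns differ in rows `j'` and `j' - δ`, which cannot be
`±1` simultaneously because `2 ≠ ±δ`; otherwise they differ in three consecutive rows.
-/

open Finset Matrix

namespace Fin

variable {ν : ℕ}

lemma val_sub_eq_ite (a b : Fin ν) :
    (a - b).val = if b.val ≤ a.val then a.val - b.val else ν + a.val - b.val := by
  split_ifs with h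
  · exact Fin.coe_sub_iff_le.mpr h
  · exact Fin.coe_sub_iff_lt.mpr (not_le.mp h)

variable [NeZero ν]

lemma val_neg_one : (-1 : Fin ν).val = ν - 1 := by
  obtain ⟨n, rfl⟩ := Nat.exists_eq_succ_of_ne_zero (NeZero.ne ν)
  rw [Fin.coe_neg_one, Nat.succ_sub_one]

lemma val_one_of_two_le (hν : 2 ≤ ν) : (1 : Fin ν).val = 1 := by
  rw [Fin.val_one', Nat.mod_eq_of_lt hν]

end Fin

lemma Finset.exists_mem_ne_ne {α : Type*} [DecidableEq α] {s : Finset α} (hs : 3 ≤ #s)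
    (p q : α) : ∃ x ∈ s, x ≠ p ∧ x ≠ q := by
  obtain ⟨x, hx⟩ : (s \ {p, q}).Nonempty := by
    rw [← card_pos]
    have := le_card_sdiff {p, q} s
    have := card_le_two (a := p) (b := q)
    omega
  simp only [mem_sdiff, mem_insert, mem_singleton, not_or] at hx
  exact ⟨x, hx.1, hx.2⟩

namespace Matrix

variable {m n α : Type*} [DecidableEq m] [DecidableEq n]

def swapColsOn (M : Matrix m n α) (R : Finset m) (a b : n) : Matrix m n α :=
  of fun i j => if i ∈ R then M i (Equiv.swap a b j) else M i j

variable (M : Matrix m n α) (R : Finset m) (a b : n)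

lemma swapColsOn_apply_of_mem {i : m} (hi : i ∈ R) (j : n) :
    M.swapColsOn R a b i j = M i (Equiv.swap a b j) := if_pos hi

lemma swapColsOn_apply_of_notMem {i : m} (hi : i ∉ R) (j : n) :
    M.swapColsOn R a b i j = M i j := if_neg hi

variable [AddCommMonoid α]

lemma sum_swapColsOn_row [Fintype n] (i : m) : ∑ j, M.swapColsOn R a b i j = ∑ j, M i j := by
  by_cases hi : i ∈ R
  · simp only [swapColsOn_apply_of_mem M R a b hi, Equiv.sum_comp]
  · simp only [swapColsOn_apply_of_notMem M R a b hi]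

lemma sum_swapColsOn_col [Fintype m] (h : ∑ i ∈ R, M i a = ∑ i ∈ R, M i b) (j : n) :
    ∑ i, M.swapColsOn R a b i j = ∑ i, M i j := by
  have hR : ∑ i ∈ R, M i (Equiv.swap a b j) = ∑ i ∈ R, M i j := by
    rcases eq_or_ne j a with rfl | hja
    · rw [Equiv.swap_apply_left, h]
    rcases eq_or_ne j b with rfl | hjb
    · rw [Equiv.swap_apply_right, h]
    · rw [Equiv.swap_apply_of_ne_of_ne hja hjb]
  rw [← sum_add_sum_compl R, ← sum_add_sum_compl R (fun i => M i j),
    sum_congr rfl fun i hi => swapColsOn_apply_of_mem M R a b hi j, hR,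
    sum_congr rfl fun i hi => swapColsOn_apply_of_notMem M R a b (mem_compl.mp hi) j]

end Matrix


section Band

variable {ν δ : ℕ}

def band (ν δ : ℕ) : Matrix (Fin ν) (Fin ν) ℕ :=
  of fun i j => if (j - i).val < δ then 1 else 0

lemma sum_ite_val_lt (hδ : δ ≤ ν) : ∑ k : Fin ν, (if k.val < δ then 1 else 0) = δ := by
  rw [sum_boole, Fin.card_filter_val_lt, min_eq_right hδ, Nat.cast_id]

lemma sum_band_row [NeZero ν] (hδ : δ ≤ ν) (i : Fin ν) : ∑ j, band ν δ i j = δ :=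
  (Equiv.sum_comp (Equiv.subRight i) fun k : Fin ν => if k.val < δ then 1 else 0).trans
    (sum_ite_val_lt hδ)

lemma sum_band_col [NeZero ν] (hδ : δ ≤ ν) (j : Fin ν) : ∑ i, band ν δ i j = δ :=
  (Equiv.sum_comp (Equiv.subLeft j) fun k : Fin ν => if k.val < δ then 1 else 0).trans
    (sum_ite_val_lt hδ)

lemma band_apply_eq_zero_or_one (i j : Fin ν) : band ν δ i j = 0 ∨ band ν δ i j = 1 := by
  simp only [band, of_apply]; split_ifs <;> simp

lemma band_apply_ne_of_val_lt_iff_not [NeZero ν] {j j' t : Fin ν}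
    (ht : t.val < δ ↔ ¬(t - (j' - j)).val < δ) :
    band ν δ (j' - t) j ≠ band ν δ (j' - t) j' := by
  have : j - (j' - t) = t - (j' - j) := by abel
  simp only [band, of_apply, sub_sub_cancel, this]
  split_ifs <;> simp_all

lemma val_lt_iff_not_val_sub_lt_of_lt {d t : Fin ν} (hd : d.val ≤ ν - δ) (htd : t.val < d.val)
    (htδ : t.val < δ) : t.val < δ ↔ ¬(t - d).val < δ := by
  rw [Fin.val_sub_eq_ite]; split_ifs <;> omega

lemma val_lt_iff_not_val_sub_lt_of_le {d t : Fin ν} (hd : d.val ≤ δ) (hδt : δ ≤ t.val)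
    (htd : t.val < δ + d.val) : t.val < δ ↔ ¬(t - d).val < δ := by
  rw [Fin.val_sub_eq_ite]; split_ifs <;> omega

lemma exists_ne_ne_val_lt_iff_not_val_sub_lt [NeZero ν] (hδ3 : 3 ≤ δ) (hδν : δ + 3 ≤ ν)
    {d : Fin ν} (hd0 : 0 < d.val) (hd : 2 * d.val ≤ ν) {P Q : Fin ν} (hPQ : (P - Q).val ≠ δ)
    (hQP : (Q - P).val ≠ δ) :
    ∃ t, t ≠ P ∧ t ≠ Q ∧ (t.val < δ ↔ ¬(t - d).val < δ) := by
  by_cases hsmall : d.val ≤ δ ∧ d.val ≤ ν - δ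
  · have h0 := val_lt_iff_not_val_sub_lt_of_lt (t := 0) hsmall.2 hd0
      (by simp only [Fin.val_zero]; omega)
    have hδ := val_lt_iff_not_val_sub_lt_of_le (t := ⟨δ, by omega⟩) hsmall.1 le_rfl
      (show δ < δ + d.val by omega)
    by_cases h0PQ : 0 = P ∨ 0 = Q
    · have hne : (⟨δ, by omega⟩ : Fin ν) ≠ 0 :=
        Fin.ne_of_val_ne (by simp only [Fin.val_zero]; omega)
      rcases h0PQ with rfl | rfl
      · exact ⟨_, hne, fun h => hQP (by rw [← h, sub_zero]), hδ⟩
      · exact ⟨_, fun h => hPQ (by rw [← h, sub_zero]), hne, hδ⟩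
    · push Not at h0PQ
      exact ⟨_, h0PQ.1, h0PQ.2, h0⟩
  · obtain ⟨s, hs, hsep⟩ : ∃ s : Finset (Fin ν), 3 ≤ #s ∧
        ∀ t ∈ s, (t.val < δ ↔ ¬(t - d).val < δ) := by
      rcases lt_or_ge δ d.val with hδd | hdδ
      · refine ⟨Icc ⟨0, by omega⟩ ⟨2, by omega⟩, by simp [Fin.card_Icc], fun t ht => ?_⟩
        simp only [mem_Icc, Fin.le_def] at ht
        exact val_lt_iff_not_val_sub_lt_of_lt (by omega) (by omega) (by omega)
      · refine ⟨Icc ⟨δ, by omega⟩ ⟨δ + 2, by omega⟩, by simp [Fin.card_Icc]; omega,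
          fun t ht => ?_⟩
        simp only [mem_Icc, Fin.le_def] at ht
        exact val_lt_iff_not_val_sub_lt_of_le hdδ ht.1 (by omega)
    obtain ⟨t, ht, htP, htQ⟩ := exists_mem_ne_ne hs P Q
    exact ⟨t, htP, htQ, hsep t ht⟩

lemma band_exists_row_ne [NeZero ν] (hδ3 : 3 ≤ δ) (hδν : δ + 3 ≤ ν) {p q : Fin ν}
    (hpq : (p - q).val ≠ δ) (hqp : (q - p).val ≠ δ) {j j' : Fin ν} (hjj' : j ≠ j') :
    ∃ i, i ≠ p ∧ i ≠ q ∧ band ν δ i j ≠ band ν δ i j' := by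
  have hval := Fin.val_ne_iff.mpr hjj'
  wlog hk : 2 * (j' - j).val ≤ ν generalizing j j'
  · obtain ⟨i, hip, hiq, hi⟩ := this hjj'.symm hval.symm (by
      rw [Fin.val_sub_eq_ite] at hk ⊢; split_ifs at hk ⊢ <;> omega)
    exact ⟨i, hip, hiq, hi.symm⟩
  have hd0 : 0 < (j' - j).val := by rw [Fin.val_sub_eq_ite]; split_ifs <;> omega
  obtain ⟨t, htp, htq, ht⟩ := exists_ne_ne_val_lt_iff_not_val_sub_lt hδ3 hδν hd0 hk
    (P := j' - p) (Q := j' - q) (by rwa [sub_sub_sub_cancel_left])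
    (by rwa [sub_sub_sub_cancel_left])
  exact ⟨j' - t, fun h => htp (by rw [← h, sub_sub_cancel]),
    fun h => htq (by rw [← h, sub_sub_cancel]), band_apply_ne_of_val_lt_iff_not ht⟩

lemma band_one_swap [NeZero ν] (hδ : 1 ≤ δ) (hδν : δ + 2 ≤ ν) {c : Fin ν} (hc : c.val = δ)
    (j : Fin ν) :
    band ν δ 1 (Equiv.swap 0 c j) = band ν δ 0 j := by
  have h1 := Fin.val_one_of_two_le (ν := ν) (by omega)
  simp only [band, of_apply, sub_zero]
  rcases eq_or_ne j 0 with rfl | hj0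
  · simp only [Equiv.swap_apply_left, Fin.val_sub_eq_ite, h1, hc, Fin.val_zero]
    grind
  rcases eq_or_ne j c with rfl | hjc
  · simp only [Equiv.swap_apply_right, Fin.val_sub_eq_ite, h1, hc, Fin.val_zero]
    grind
  · have hj0' : j.val ≠ 0 := Fin.val_ne_iff.mpr hj0
    have hjc' := Fin.val_ne_iff.mpr hjc
    simp only [Equiv.swap_apply_of_ne_of_ne hj0 hjc, Fin.val_sub_eq_ite, h1]
    grind

lemma sum_band_one_neg_one [NeZero ν] (hδ : 2 ≤ δ) (hδν : δ + 2 ≤ ν) {c : Fin ν}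
    (hc : c.val = δ) :
    ∑ i ∈ {1, -1}, band ν δ i 0 = ∑ i ∈ {1, -1}, band ν δ i c := by
  have h1 := Fin.val_one_of_two_le (ν := ν) (by omega)
  have h1m1 : (1 : Fin ν) ≠ -1 := Fin.val_ne_iff.mp (by rw [h1, Fin.val_neg_one]; omega)
  simp only [sum_pair h1m1, band, of_apply, Fin.val_sub_eq_ite, h1, Fin.val_neg_one, hc,
    Fin.val_zero]
  grind

end Band

theorem stmt_2_general (ν δ : ℕ) (hδ3 : 3 ≤ δ) (hδ : δ ≤ ν - 3) :
    ∃ M : Matrix (Fin ν) (Fin ν) ℕ,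
      (∀ i j, M i j = 0 ∨ M i j = 1) ∧
      (∀ i, ∑ j, M i j = δ) ∧
      (∀ j, ∑ i, M i j = δ) ∧
      (∃ i i' : Fin ν, i ≠ i' ∧ ∀ j, M i j = M i' j) ∧
      (∀ j j' : Fin ν, j ≠ j' → ∃ i, M i j ≠ M i j') := by
  have hδν : δ + 3 ≤ ν := by omega
  have : NeZero ν := ⟨by omega⟩
  have h1 := Fin.val_one_of_two_le (ν := ν) (by omega)
  have h0 : (0 : Fin ν) ∉ ({1, -1} : Finset (Fin ν)) := by
    simp only [mem_insert, mem_singleton, not_or, ← Fin.val_ne_iff, h1, Fin.val_neg_one,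
      Fin.val_zero]
    omega
  set c : Fin ν := ⟨δ, by omega⟩
  have hc : c.val = δ := rfl
  refine ⟨(band ν δ).swapColsOn {1, -1} 0 c, fun i j => ?_,
    fun i => by rw [sum_swapColsOn_row, sum_band_row (by omega)],
    fun j => by rw [sum_swapColsOn_col _ _ _ _ (sum_band_one_neg_one (by omega) (by omega) hc),
      sum_band_col (by omega)],
    ⟨1, 0, fun h => h0 (h ▸ mem_insert_self _ _), fun j => ?_⟩, fun j j' hjj' => ?_⟩
  · simp only [swapColsOn, of_apply]
    split_ifs <;> exact band_apply_eq_zero_or_one _ _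
  · rw [swapColsOn_apply_of_mem _ _ _ _ (mem_insert_self _ _),
      swapColsOn_apply_of_notMem _ _ _ _ h0, band_one_swap (by omega) (by omega) hc]
  · obtain ⟨i, hi1, hi2, hi⟩ := band_exists_row_ne hδ3 hδν (p := 1) (q := -1)
      (by rw [Fin.val_sub_eq_ite, h1, Fin.val_neg_one]; split_ifs <;> omega)
      (by rw [Fin.val_sub_eq_ite, h1, Fin.val_neg_one]; split_ifs <;> omega) hjj'
    have hi : i ∉ ({1, -1} : Finset (Fin ν)) := by simp [hi1, hi2]
    refine ⟨i, ?_⟩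
    rwa [swapColsOn_apply_of_notMem _ _ _ _ hi, swapColsOn_apply_of_notMem _ _ _ _ hi]

/-- For `ν ≥ 6` and a divisor `δ` of `ν` with `3 ≤ δ ≤ ν - 3`, there is a `ν × ν`
`{0,1}`-matrix with all row and column sums equal to `δ`, two identical rows,
and pairwise distinct columns. -/
theorem stmt_2 (ν δ : ℕ) (hν : 6 ≤ ν) (hδν : δ ∣ ν) (hδ3 : 3 ≤ δ) (hδ : δ ≤ ν - 3) :
    ∃ M : Matrix (Fin ν) (Fin ν) ℕ,
      (∀ i j, M i j = 0 ∨ M i j = 1) ∧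
      (∀ i, ∑ j, M i j = δ) ∧
      (∀ j, ∑ i, M i j = δ) ∧
      (∃ i i' : Fin ν, i ≠ i' ∧ ∀ j, M i j = M i' j) ∧
      (∀ j j' : Fin ν, j ≠ j' → ∃ i, M i j ≠ M i j') :=
  stmt_2_general ν δ hδ3 hδ
end

section
/- Let (Y_n)_{n ∈ ℕ} be an inverse sequence of nonempty finite discrete topological spaces with surjective bonding maps q_n : Y_{n+1} → Y_n such that every fiber q_n^{-1}(y) has at least 2 elements. Then the inverse limit lim← Y_n is homeomorphic to the Cantor space ℕ → Bool (with the product topology). -/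
open List

/-- `ExtB l x` means the infinite sequence `x` extends the finite list `l`. -/
def ExtB (l : List Bool) (x : ℕ → Bool) : Prop :=
  ∀ i < l.length, l.getD i false = x i

lemma extB_nil (x : ℕ → Bool) : ExtB [] x := by
  intro i h; simp at h

lemma extB_append {l l' : List Bool} {x : ℕ → Bool} :
    ExtB (l ++ l') x ↔ ExtB l x ∧ ExtB l' (fun i => x (l.length + i)) := by
  constructor
  · intro h
    refine ⟨fun i hi => ?_, fun i hi => ?_⟩
    · have := h i (by simp; omega)
      rwa [List.getD_append _ _ _ _ hi] at this
    · have := h (l.length + i) (by simp; omega)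
      rwa [List.getD_append_right _ _ _ _ (by omega), Nat.add_sub_cancel_left] at this
  · rintro ⟨h1, h2⟩ i hi
    simp only [List.length_append] at hi
    by_cases hc : i < l.length
    · rw [List.getD_append _ _ _ _ hc]; exact h1 i hc
    · rw [List.getD_append_right _ _ _ _ (by omega)]
      have := h2 (i - l.length) (by omega)
      simp only [] at this
      rwa [Nat.add_sub_cancel' (by omega)] at this

lemma extB_of_prefix {l L : List Bool} {x : ℕ → Bool} (h : l <+: L) (hL : ExtB L x) :
    ExtB l x := by
  obtain ⟨t, rfl⟩ := h
  exact (extB_append.1 hL).1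

lemma extB_replicate_true {n : ℕ} {x : ℕ → Bool} :
    ExtB (List.replicate n true) x ↔ ∀ j < n, x j = true := by
  constructor
  · intro h j hj
    have := h j (by simpa using hj)
    rw [List.getD_eq_getElem _ _ (by simpa using hj), List.getElem_replicate] at this
    exact this.symm
  · intro h i hi
    simp only [List.length_replicate] at hi
    rw [List.getD_eq_getElem _ _ (by simpa using hi), List.getElem_replicate, h i hi]

/-- Unary coding of `Fin k` as a partition of the binary tree into cylinders. -/
def finCode (k : ℕ) (i : Fin k) : List Bool :=
  List.replicate i.val true ++ (if i.val + 1 = k then [] else [false])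

lemma finCode_length (k : ℕ) (i : Fin k) :
    (finCode k i).length = i.val + (if i.val + 1 = k then 0 else 1) := by
  simp only [finCode, List.length_append, List.length_replicate]
  split <;> simp

lemma finCode_length_pos {k : ℕ} (hk : 1 < k) (i : Fin k) : 0 < (finCode k i).length := by
  rw [finCode_length]
  split <;> omega

lemma extB_finCode {k : ℕ} {i : Fin k} {x : ℕ → Bool} :
    ExtB (finCode k i) x ↔ (∀ j < i.val, x j = true) ∧ (i.val + 1 = k ∨ x i.val = false) := by
  unfold finCode
  rw [extB_append, extB_replicate_true, List.length_replicate]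
  by_cases h : i.val + 1 = k
  · rw [if_pos h]
    constructor
    · rintro ⟨h1, _⟩; exact ⟨h1, Or.inl h⟩
    · rintro ⟨h1, _⟩; exact ⟨h1, extB_nil _⟩
  · rw [if_neg h]
    constructor
    · rintro ⟨h1, h2⟩
      refine ⟨h1, Or.inr ?_⟩
      have := h2 0 (by simp)
      simpa using this.symm
    · rintro ⟨h1, h2⟩
      refine ⟨h1, ?_⟩
      intro j hj
      simp only [List.length_singleton] at hj
      interval_cases j
      simpa using (h2.resolve_left h).symm

lemma finCode_complete {k : ℕ} (hk : 0 < k) (x : ℕ → Bool) :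
    ∃! i : Fin k, ExtB (finCode k i) x := by
  by_cases h : ∃ j, j + 1 < k ∧ x j = false
  · obtain ⟨m, hm, hmin⟩ : ∃ m, (m + 1 < k ∧ x m = false) ∧
        ∀ j < m, ¬(j + 1 < k ∧ x j = false) :=
      ⟨Nat.find h, Nat.find_spec h, fun j hj => Nat.find_min h hj⟩
    refine ⟨⟨m, by omega⟩, ?_, ?_⟩
    · show ExtB (finCode k ⟨m, by omega⟩) x
      rw [extB_finCode]
      refine ⟨fun j hj => ?_, Or.inr hm.2⟩
      have hmin' := hmin j hj
      have hjk : j + 1 < k := by omega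
      rcases Bool.eq_false_or_eq_true (x j) with hb | hb
      · exact hb
      · exact absurd ⟨hjk, hb⟩ hmin'
    · rintro ⟨i, hi⟩ hext
      have hext' : ExtB (finCode k ⟨i, hi⟩) x := hext
      rw [extB_finCode] at hext'
      obtain ⟨h1, h2⟩ := hext'
      apply Fin.ext
      show i = m
      by_contra hne
      rcases Nat.lt_or_ge i m with hlt | hge
      · rcases h2 with h2 | h2
        · simp only at h2; omega
        · exact absurd ⟨by simp only at *; omega, h2⟩ (hmin i hlt)
      · have hmi : m < i := by omega
        have := h1 m hmi
        rw [hm.2] at this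
        exact Bool.false_ne_true this
  · push_neg at h
    refine ⟨⟨k - 1, by omega⟩, ?_, ?_⟩
    · show ExtB (finCode k ⟨k - 1, by omega⟩) x
      rw [extB_finCode]
      constructor
      · intro j hj
        simp only at hj
        rcases Bool.eq_false_or_eq_true (x j) with hb | hb
        · exact hb
        · exact absurd hb (h j (by omega))
      · left; simp only; omega
    · rintro ⟨i, hi⟩ hext
      have hext' : ExtB (finCode k ⟨i, hi⟩) x := hext
      rw [extB_finCode] at hext'
      obtain ⟨_, h2⟩ := hext'
      apply Fin.ext
      show i = k - 1
      rcases h2 with h2 | h2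
      · simp only at h2; omega
      · by_contra hne
        have hik : i + 1 < k := by omega
        exact (h i hik) h2

/-- Coding of an arbitrary finite type as a partition of the binary tree. -/
noncomputable def typeCode (S : Type*) [Finite S] (s : S) : List Bool :=
  finCode (Nat.card S) (Finite.equivFin S s)

lemma typeCode_complete (S : Type*) [Finite S] [Nonempty S] (x : ℕ → Bool) :
    ∃! s : S, ExtB (typeCode S s) x := by
  have hk : 0 < Nat.card S := Nat.card_pos
  obtain ⟨i, hi, hui⟩ := finCode_complete hk x
  refine ⟨(Finite.equivFin S).symm i, ?_, ?_⟩
  · show ExtB (finCode (Nat.card S) ((Finite.equivFin S) ((Finite.equivFin S).symm i))) x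
    rwa [Equiv.apply_symm_apply]
  · intro s hs
    have h2 := hui (Finite.equivFin S s) hs
    rw [← h2, Equiv.symm_apply_apply]

lemma typeCode_length_pos (S : Type*) [Finite S] (h : 1 < Nat.card S) (s : S) :
    0 < (typeCode S s).length :=
  finCode_length_pos h _

section InvLimit

variable {Y : ℕ → Type*} [∀ n, Finite (Y n)] (q : ∀ n, Y (n + 1) → Y n)

/-- Recursive coding of levels of the inverse system. -/
noncomputable def cLim : ∀ n, Y n → List Bool
  | 0, z => typeCode (Y 0) z
  | (n + 1), z => cLim n (q n z) ++ typeCode {w : Y (n + 1) // q n w = q n z} ⟨z, rfl⟩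

lemma cLim_succ_eq {n : ℕ} (z : Y (n + 1)) (y : Y n) (h : q n z = y) :
    cLim q (n + 1) z = cLim q n y ++ typeCode {w : Y (n + 1) // q n w = y} ⟨z, h⟩ := by
  subst h; rfl

lemma cLim_complete [Nonempty (Y 0)] (hsurj : ∀ n, Function.Surjective (q n))
    (n : ℕ) (x : ℕ → Bool) : ∃! z : Y n, ExtB (cLim q n z) x := by
  induction n generalizing x with
  | zero => exact typeCode_complete (Y 0) x
  | succ n ih =>
    obtain ⟨y, hy, huy⟩ := ih x
    haveI : Nonempty {w : Y (n + 1) // q n w = y} := by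
      obtain ⟨w, hw⟩ := hsurj n y; exact ⟨⟨w, hw⟩⟩
    obtain ⟨⟨z, hz⟩, hzext, huz⟩ :=
      typeCode_complete {w : Y (n + 1) // q n w = y} (fun i => x ((cLim q n y).length + i))
    refine ⟨z, ?_, ?_⟩
    · show ExtB (cLim q (n + 1) z) x
      rw [cLim_succ_eq q z y hz, extB_append]
      exact ⟨hy, hzext⟩
    · intro w hw
      have hw' : ExtB (cLim q (n + 1) w) x := hw
      rw [cLim_succ_eq q w (q n w) rfl, extB_append] at hw'
      have h1 : q n w = y := huy _ hw'.1
      have hw'' : ExtB (cLim q (n + 1) w) x := hw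
      rw [cLim_succ_eq q w y h1, extB_append] at hw''
      have := huz ⟨w, h1⟩ hw''.2
      exact congrArg Subtype.val this

lemma cLim_length
    (hfib : ∀ n (y : Y n), ∃ a b : Y (n + 1), a ≠ b ∧ q n a = y ∧ q n b = y)
    (n : ℕ) (z : Y n) : n ≤ (cLim q n z).length := by
  induction n with
  | zero => exact Nat.zero_le _
  | succ n ih =>
    have hcard : 1 < Nat.card {w : Y (n + 1) // q n w = q n z} := by
      obtain ⟨a, b, hab, ha, hb⟩ := hfib n (q n z)
      haveI : Nontrivial {w : Y (n + 1) // q n w = q n z} :=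
        ⟨⟨a, ha⟩, ⟨b, hb⟩, fun h => hab (congrArg Subtype.val h)⟩
      exact Finite.one_lt_card_iff_nontrivial.2 this
    have hpos := typeCode_length_pos _ hcard (⟨z, rfl⟩ : {w : Y (n + 1) // q n w = q n z})
    have heq : cLim q (n + 1) z =
        cLim q n (q n z) ++ typeCode {w : Y (n + 1) // q n w = q n z} ⟨z, rfl⟩ := rfl
    rw [heq, List.length_append]
    have := ih (q n z)
    omega

lemma cLim_prefix {y : ∀ n, Y n} (hy : ∀ n, q n (y (n + 1)) = y n)
    {m n : ℕ} (h : m ≤ n) : cLim q m (y m) <+: cLim q n (y n) := by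
  induction n, h using Nat.le_induction with
  | base => exact List.prefix_refl _
  | succ n hmn ih =>
    refine ih.trans ?_
    rw [cLim_succ_eq q (y (n + 1)) (y n) (hy n)]
    exact List.prefix_append _ _

end InvLimit

lemma extB_getD_eq {l l' : List Bool} {x : ℕ → Bool} {i : ℕ}
    (h : ExtB l x) (h' : ExtB l' x) (hi : i < l.length) (hi' : i < l'.length) :
    l.getD i false = l'.getD i false := by
  rw [h i hi, h' i hi']

/-- The inverse limit of a sequence of nonempty finite discrete spaces with surjective
bonding maps all of whose fibers have at least two points is homeomorphic to the
Cantor space `ℕ → Bool`. -/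
theorem stmt_7 (Y : ℕ → Type*) [∀ n, TopologicalSpace (Y n)] [∀ n, DiscreteTopology (Y n)]
    [∀ n, Fintype (Y n)] [∀ n, Nonempty (Y n)]
    (q : ∀ n, Y (n + 1) → Y n) (hsurj : ∀ n, Function.Surjective (q n))
    (hfib : ∀ n (y : Y n), ∃ a b : Y (n + 1), a ≠ b ∧ q n a = y ∧ q n b = y) :
    Nonempty ({y : ∀ n, Y n // ∀ n, q n (y (n + 1)) = y n} ≃ₜ (ℕ → Bool)) := by
  classical
  set L := {y : ∀ n, Y n // ∀ n, q n (y (n + 1)) = y n} with hL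
  have hlen : ∀ (i : ℕ) (z : Y (i + 1)), i < (cLim q (i + 1) z).length :=
    fun i z => (Nat.lt_succ_self i).trans_le (cLim_length q hfib (i + 1) z)
  set F : L → (ℕ → Bool) := fun y i => (cLim q (i + 1) (y.1 (i + 1))).getD i false with hF
  -- every level code is a prefix of F y
  have hext : ∀ (y : L) (n : ℕ), ExtB (cLim q n (y.1 n)) (F y) := by
    intro y n i hi
    have p1 : cLim q n (y.1 n) <+: cLim q (max n (i + 1)) (y.1 (max n (i + 1))) :=
      cLim_prefix q y.2 (le_max_left _ _)
    have p2 : cLim q (i + 1) (y.1 (i + 1)) <+: cLim q (max n (i + 1)) (y.1 (max n (i + 1))) :=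
      cLim_prefix q y.2 (le_max_right _ _)
    obtain ⟨t1, ht1⟩ := p1
    obtain ⟨t2, ht2⟩ := p2
    show (cLim q n (y.1 n)).getD i false = (cLim q (i + 1) (y.1 (i + 1))).getD i false
    rw [← List.getD_append _ t1 false i hi, ← List.getD_append _ t2 false i (hlen i _),
      ht1, ht2]
  have hbij : Function.Bijective F := by
    constructor
    · intro y y' hFy
      apply Subtype.ext
      funext n
      obtain ⟨z, hz, hu⟩ := cLim_complete q hsurj n (F y)
      have h1 := hu _ (hext y n)
      have h2 := hu _ (hFy ▸ hext y' n)
      rw [h1, h2]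
    · intro x
      have H : ∀ n, ∃! z : Y n, ExtB (cLim q n z) x := fun n => cLim_complete q hsurj n x
      set y : ∀ n, Y n := fun n => (H n).exists.choose with hy
      have hyext : ∀ n, ExtB (cLim q n (y n)) x := fun n => (H n).exists.choose_spec
      have hthread : ∀ n, q n (y (n + 1)) = y n := by
        intro n
        have hpre : cLim q n (q n (y (n + 1))) <+: cLim q (n + 1) (y (n + 1)) := by
          rw [cLim_succ_eq q (y (n + 1)) (q n (y (n + 1))) rfl]
          exact List.prefix_append _ _
        exact (H n).unique (extB_of_prefix hpre (hyext (n + 1))) (hyext n)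
      refine ⟨⟨y, hthread⟩, ?_⟩
      funext i
      exact hyext (i + 1) i (hlen i _)
  have hcont : Continuous F := by
    apply continuous_pi
    intro i
    exact (continuous_of_discreteTopology
      (f := fun z : Y (i + 1) => (cLim q (i + 1) z).getD i false)).comp
      ((continuous_apply (i + 1)).comp continuous_subtype_val)
  haveI : CompactSpace L := by
    have hclosed : IsClosed {y : ∀ n, Y n | ∀ n, q n (y (n + 1)) = y n} := by
      have hsets : {y : ∀ n, Y n | ∀ n, q n (y (n + 1)) = y n} =
          ⋂ n, {y : ∀ n, Y n | q n (y (n + 1)) = y n} := by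
        ext y; simp
      rw [hsets]
      exact isClosed_iInter fun n =>
        isClosed_eq (continuous_of_discreteTopology.comp (continuous_apply (n + 1)))
          (continuous_apply n)
    exact isCompact_iff_compactSpace.mp hclosed.isCompact
  exact ⟨Continuous.homeoOfEquivCompactToT2 (f := Equiv.ofBijective F hbij) hcont⟩
end
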